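/- For a monotone submodular set function f with f(∅)=0 on a ground set, the greedy algorithm that iteratively adds the element with maximal marginal gain, after K steps, achieves f(S_greedy) ≥ (1 - 1/e) · max over subsets S of size K of f(S). In fact the finite bound f(S_greedy) ≥ (1 - (1 - 1/K)^K) · f(S*) holds. -/
import Mathlib


/-- Greedy submodular maximization achieves the `1 - (1 - 1/K)^K ≥ 1 - 1/e`
approximation guarantee for monotone submodular functions with `f ∅ = 0`. -/
theorem greedy_submodular_guarantee
    {α : Type*} [DecidableEq α] (f : Finset α → ℝ)
    (hmono : ∀ S T : Finset α, S ⊆ T → f S ≤ f T)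
    (hsubmod : ∀ S T : Finset α, S ⊆ T → ∀ x ∉ T,
      f (insert x T) - f T ≤ f (insert x S) - f S)
    (hempty : f ∅ = 0)
    (K : ℕ) (hK : 1 ≤ K)
    (G : ℕ → Finset α) (hG0 : G 0 = ∅)
    (hGstep : ∀ k, ∃ a, G (k + 1) = insert a (G k) ∧
      ∀ b, f (insert b (G k)) ≤ f (insert a (G k))) :
    ∀ S : Finset α, S.card = K →
      (1 - (1 - 1 / (K : ℝ)) ^ K) * f S ≤ f (G K) ∧
      (1 - 1 / Real.exp 1) * f S ≤ f (G K) := by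
  have hKpos : (0:ℝ) < K := by exact_mod_cast hK
  have marg_nonneg : ∀ (A : Finset α) (x : α), 0 ≤ f (insert x A) - f A := by
    intro A x
    have := hmono A (insert x A) (Finset.subset_insert x A)
    linarith
  have key : ∀ S A : Finset α, f (A ∪ S) ≤ f A + ∑ x ∈ S, (f (insert x A) - f A) := by
    intro S
    induction S using Finset.induction_on with
    | empty => intro A; simp
    | @insert y s hy ih =>
      intro A
      rw [Finset.union_insert, Finset.sum_insert hy]
      by_cases hmem : y ∈ A ∪ s
      · rw [Finset.insert_eq_self.mpr hmem]
        have := ih A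
        have := marg_nonneg A y
        linarith
      · have h1 := hsubmod A (A ∪ s) Finset.subset_union_left y hmem
        have := ih A
        linarith
  intro S hS
  have hfS : 0 ≤ f S := by
    have := hmono ∅ S (Finset.empty_subset S)
    linarith [hempty]
  have hq : (0:ℝ) ≤ 1 - 1 / K := by
    have h1 : (1:ℝ) ≤ K := by exact_mod_cast hK
    have : 1 / (K:ℝ) ≤ 1 := by
      rw [div_le_one hKpos]; exact h1
    linarith
  have step : ∀ k, f S - f (G (k + 1)) ≤ (1 - 1 / K) * (f S - f (G k)) := by
    intro k
    obtain ⟨a, ha, hmax⟩ := hGstep k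
    have h1 : f S ≤ f (G k ∪ S) := hmono _ _ Finset.subset_union_right
    have h2 := key S (G k)
    have h3 : ∑ x ∈ S, (f (insert x (G k)) - f (G k))
        ≤ (K : ℝ) * (f (G (k + 1)) - f (G k)) := by
      rw [ha]
      have hb : ∀ x ∈ S, f (insert x (G k)) - f (G k)
          ≤ f (insert a (G k)) - f (G k) := by
        intro x _; linarith [hmax x]
      calc ∑ x ∈ S, (f (insert x (G k)) - f (G k))
          ≤ S.card • (f (insert a (G k)) - f (G k)) :=
            Finset.sum_le_card_nsmul S _ _ hb
        _ = (K : ℝ) * (f (insert a (G k)) - f (G k)) := by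
            rw [nsmul_eq_mul, hS]
    have h4 : f S - f (G k) ≤ (K : ℝ) * (f (G (k + 1)) - f (G k)) := by linarith
    have h5 : (1 / (K : ℝ)) * (f S - f (G k)) ≤ f (G (k + 1)) - f (G k) := by
      have := mul_le_mul_of_nonneg_left h4 (le_of_lt (one_div_pos.mpr hKpos))
      have hKne : (K:ℝ) ≠ 0 := ne_of_gt hKpos
      rw [one_div, ← mul_assoc, inv_mul_cancel₀ hKne, one_mul] at this
      calc (1 / (K : ℝ)) * (f S - f (G k)) = (K:ℝ)⁻¹ * (f S - f (G k)) := by rw [one_div]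
        _ ≤ f (G (k + 1)) - f (G k) := this
    nlinarith [h5]
  have iter : ∀ k, f S - f (G k) ≤ (1 - 1 / K) ^ k * f S := by
    intro k
    induction k with
    | zero => simp [hG0, hempty]
    | succ k ih =>
      calc f S - f (G (k + 1)) ≤ (1 - 1 / K) * (f S - f (G k)) := step k
        _ ≤ (1 - 1 / K) * ((1 - 1 / K) ^ k * f S) :=
            mul_le_mul_of_nonneg_left ih hq
        _ = (1 - 1 / K) ^ (k + 1) * f S := by ring
  have main1 : (1 - (1 - 1 / (K : ℝ)) ^ K) * f S ≤ f (G K) := by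
    have := iter K
    nlinarith
  refine ⟨main1, ?_⟩
  have hexp : (1 - 1 / (K:ℝ)) ^ K ≤ 1 / Real.exp 1 := by
    have h1 : (1 - 1 / (K:ℝ)) ≤ Real.exp (-(1 / K)) := by
      have := Real.add_one_le_exp (-(1 / (K:ℝ)))
      linarith
    have h2 := pow_le_pow_left₀ hq h1 K
    have h3 : Real.exp (-(1 / (K:ℝ))) ^ K = Real.exp (-1) := by
      rw [← Real.exp_nat_mul]
      congr 1
      field_simp
    rw [h3, Real.exp_neg, ← one_div] at h2
    exact h2
  have : (1 - 1 / Real.exp 1) * f S ≤ (1 - (1 - 1 / (K:ℝ)) ^ K) * f S :=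
    mul_le_mul_of_nonneg_right (by linarith) hfS
  linarith
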